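/- Let ρ ≥ 0, ν ≥ 0, let E : ℝ^d → ℝ be continuous and nonnegative, and fix u⁰, u¹ ∈ ℝ^d. For ε > 0 define the curve v̂_ε : [0,∞) → ℝ^d componentwise by (v̂_ε)_i(t) = u⁰_i + arctan(ε u¹_i t) for i = 1,…,d. Then v̂_ε(0) = u⁰, v̂_ε'(0) = ε u¹, and there exists a constant C > 0, depending only on ρ, ν, E, u⁰, u¹, d, such that for every ε ∈ (0,1] one has ∫_0^∞ e^{-t} ( (ρ/2)|v̂_ε''(t)|² + (εν/2)|v̂_ε'(t)|² + ε² E(v̂_ε(t)) ) dt ≤ C ε². -/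

import Mathlib

/-!
Each component of `v̂_ε` is `u⁰_i` plus an arctangent, so the curve stays in a fixed ball around
`u⁰`, where the continuous `E` is bounded; the derivatives of `arctan (c t)` are bounded by `|c|`
and `c²` uniformly in `t`, which makes `|v̂_ε'| = O(ε)` and `|v̂_ε''| = O(ε²)`. For `ε ≤ 1` the
bracket in the integrand is therefore `O(ε²)` uniformly in `t`, and `∫₀^∞ e^{-t} dt = 1`.
-/

/-- The competitor curve `v̂_ε(t)` with components `u⁰_i + arctan(ε u¹_i t)`. -/
noncomputable def wideCompetitor (d : ℕ) (a b : EuclideanSpace ℝ (Fin d)) (ε : ℝ) :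
    ℝ → EuclideanSpace ℝ (Fin d) :=
  fun t => (EuclideanSpace.equiv (Fin d) ℝ).symm fun i => a i + Real.arctan (ε * b i * t)

open Real MeasureTheory Set

theorem EuclideanSpace.norm_le_norm_of_forall_norm_le {𝕜 ι : Type*} [RCLike 𝕜] [Fintype ι]
    {x y : EuclideanSpace 𝕜 ι} (h : ∀ i, ‖x i‖ ≤ ‖y i‖) : ‖x‖ ≤ ‖y‖ := by
  rw [EuclideanSpace.norm_eq, EuclideanSpace.norm_eq]
  gcongr with i
  exact h i

theorem hasDerivAt_arctan_const_mul (c t : ℝ) :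
    HasDerivAt (fun s => arctan (c * s)) (c / (1 + (c * t) ^ 2)) t := by
  simpa [div_eq_mul_inv, mul_comm, Function.comp_def] using
    (hasDerivAt_arctan (c * t)).comp t ((hasDerivAt_id t).const_mul c)

theorem hasDerivAt_div_one_add_sq_const_mul (c t : ℝ) :
    HasDerivAt (fun s => c / (1 + (c * s) ^ 2))
      (-c ^ 2 * (2 * (c * t) / (1 + (c * t) ^ 2) ^ 2)) t := by
  have hden : HasDerivAt (fun s => 1 + (c * s) ^ 2) (2 * (c * t) * c) t := by
    simpa using (((hasDerivAt_id t).const_mul c).pow 2).const_add 1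
  refine ((hasDerivAt_const t c).div hden (by positivity)).congr_deriv ?_
  field_simp
  ring

theorem abs_div_one_add_sq_le (c x : ℝ) : |c / (1 + x ^ 2)| ≤ |c| := by
  rw [abs_div, abs_of_pos (by positivity : (0 : ℝ) < 1 + x ^ 2)]
  exact div_le_self (abs_nonneg c) (by nlinarith [sq_nonneg x])

theorem abs_two_mul_div_one_add_sq_sq_le_one (x : ℝ) : |2 * x / (1 + x ^ 2) ^ 2| ≤ 1 := by
  rw [abs_div, abs_of_pos (by positivity : (0 : ℝ) < (1 + x ^ 2) ^ 2),
    div_le_one (by positivity), abs_mul, abs_two]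
  nlinarith [sq_nonneg (|x| - 1), sq_abs x, sq_nonneg x, abs_nonneg x]

theorem EuclideanSpace.hasDerivAt_equiv_symm {𝕜 ι : Type*} [RCLike 𝕜] [Fintype ι]
    {f : ι → 𝕜 → 𝕜} {f' : ι → 𝕜} {t : 𝕜} (h : ∀ i, HasDerivAt (f i) (f' i) t) :
    HasDerivAt (fun s => (EuclideanSpace.equiv ι 𝕜).symm fun i => f i s)
      ((EuclideanSpace.equiv ι 𝕜).symm f') t :=
  (EuclideanSpace.equiv ι 𝕜).symm.hasFDerivAt.comp_hasDerivAt t (hasDerivAt_pi.2 h)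

section WideCompetitor

variable (d : ℕ) (a b : EuclideanSpace ℝ (Fin d)) (ε : ℝ)

theorem wideCompetitor_zero : wideCompetitor d a b ε 0 = a := by
  ext i
  simp [wideCompetitor]

theorem deriv_wideCompetitor :
    deriv (wideCompetitor d a b ε) = fun t =>
      (EuclideanSpace.equiv (Fin d) ℝ).symm fun i => ε * b i / (1 + (ε * b i * t) ^ 2) :=
  funext fun t => (EuclideanSpace.hasDerivAt_equiv_symm fun i =>
    (hasDerivAt_arctan_const_mul (ε * b i) t).const_add (a i)).deriv

theorem iteratedDeriv_two_wideCompetitor (t : ℝ) :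
    iteratedDeriv 2 (wideCompetitor d a b ε) t =
      (EuclideanSpace.equiv (Fin d) ℝ).symm fun i =>
        -(ε * b i) ^ 2 * (2 * (ε * b i * t) / (1 + (ε * b i * t) ^ 2) ^ 2) := by
  rw [iteratedDeriv_succ, iteratedDeriv_one, deriv_wideCompetitor]
  exact (EuclideanSpace.hasDerivAt_equiv_symm fun i =>
    hasDerivAt_div_one_add_sq_const_mul (ε * b i) t).deriv

theorem deriv_wideCompetitor_zero : deriv (wideCompetitor d a b ε) 0 = ε • b := by
  ext i
  simp [deriv_wideCompetitor]

theorem norm_deriv_wideCompetitor_le (t : ℝ) :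
    ‖deriv (wideCompetitor d a b ε) t‖ ≤ |ε| * ‖b‖ := by
  rw [← Real.norm_eq_abs, ← norm_smul, deriv_wideCompetitor]
  refine EuclideanSpace.norm_le_norm_of_forall_norm_le fun i => ?_
  refine (abs_div_one_add_sq_le (ε * b i) (ε * b i * t)).trans_eq ?_
  simp [abs_mul]

theorem norm_iteratedDeriv_two_wideCompetitor_le (t : ℝ) :
    ‖iteratedDeriv 2 (wideCompetitor d a b ε) t‖ ≤
      ε ^ 2 * ‖(EuclideanSpace.equiv (Fin d) ℝ).symm fun i => b i ^ 2‖ := by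
  rw [← abs_of_nonneg (sq_nonneg ε), ← Real.norm_eq_abs, ← norm_smul,
    iteratedDeriv_two_wideCompetitor]
  refine EuclideanSpace.norm_le_norm_of_forall_norm_le fun i => ?_
  refine (abs_mul _ _).trans_le ?_
  refine (mul_le_of_le_one_right (abs_nonneg _)
    (abs_two_mul_div_one_add_sq_sq_le_one (ε * b i * t))).trans_eq ?_
  simp [mul_pow]

theorem wideCompetitor_mem_closedBall (t : ℝ) :
    wideCompetitor d a b ε t ∈
      Metric.closedBall a ‖(EuclideanSpace.equiv (Fin d) ℝ).symm fun _ => π / 2‖ := by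
  rw [mem_closedBall_iff_norm]
  refine EuclideanSpace.norm_le_norm_of_forall_norm_le fun i => ?_
  change |a i + arctan (ε * b i * t) - a i| ≤ |π / 2|
  rw [add_sub_cancel_left, abs_of_pos pi_div_two_pos]
  exact abs_le.2 ⟨(neg_pi_div_two_lt_arctan _).le, (arctan_lt_pi_div_two _).le⟩

end WideCompetitor

theorem setLIntegral_Ioi_exp_neg_mul_le {f : ℝ → ℝ} {K : ℝ} (hf : ∀ t, 0 < t → f t ≤ K) :
    ∫⁻ t in Ioi 0, ENNReal.ofReal (exp (-t) * f t) ≤ ENNReal.ofReal K :=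
  calc ∫⁻ t in Ioi 0, ENNReal.ofReal (exp (-t) * f t)
      ≤ ∫⁻ t in Ioi 0, ENNReal.ofReal (exp (-t)) * ENNReal.ofReal K := by
        refine setLIntegral_mono' measurableSet_Ioi fun t ht => ?_
        rw [← ENNReal.ofReal_mul (exp_pos _).le]
        gcongr
        exact hf t ht
    _ = ENNReal.ofReal K := by
        rw [lintegral_mul_const' _ _ ENNReal.ofReal_ne_top,
          ← ofReal_integral_eq_lintegral_ofReal (integrableOn_exp_neg_Ioi 0)
            (ae_of_all _ fun t => (exp_pos (-t)).le),
          integral_exp_neg_Ioi_zero, ENNReal.ofReal_one, one_mul]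

theorem wide_competitor_estimate (d : ℕ) (ρ ν : ℝ) (hρ : 0 ≤ ρ) (hν : 0 ≤ ν)
    (E : EuclideanSpace ℝ (Fin d) → ℝ) (hEc : Continuous E)
    (a b : EuclideanSpace ℝ (Fin d)) :
    (∀ ε : ℝ, wideCompetitor d a b ε 0 = a)
      ∧ (∀ ε : ℝ, deriv (wideCompetitor d a b ε) 0 = ε • b)
      ∧ ∃ C > (0 : ℝ), ∀ ε ∈ Set.Ioc (0 : ℝ) 1,
          (∫⁻ t in Set.Ioi (0 : ℝ), ENNReal.ofReal (Real.exp (-t) *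
              ((ρ / 2) * ‖iteratedDeriv 2 (wideCompetitor d a b ε) t‖ ^ 2
                + (ε * ν / 2) * ‖deriv (wideCompetitor d a b ε) t‖ ^ 2
                + ε ^ 2 * E (wideCompetitor d a b ε t))))
            ≤ ENNReal.ofReal (C * ε ^ 2) := by
  refine ⟨wideCompetitor_zero d a b, deriv_wideCompetitor_zero d a b, ?_⟩
  set B₁ := ‖b‖
  set B₂ := ‖(EuclideanSpace.equiv (Fin d) ℝ).symm fun i => b i ^ 2‖
  set R := ‖(EuclideanSpace.equiv (Fin d) ℝ).symm fun _ => π / 2‖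
  obtain ⟨M, hM⟩ := (isCompact_closedBall a R).exists_bound_of_continuousOn hEc.continuousOn
  have hM₀ : 0 ≤ M := (norm_nonneg _).trans (hM a (Metric.mem_closedBall_self (norm_nonneg _)))
  refine ⟨ρ / 2 * B₂ ^ 2 + ν / 2 * B₁ ^ 2 + M + 1, by positivity, fun ε ⟨hε₀, hε₁⟩ => ?_⟩
  refine setLIntegral_Ioi_exp_neg_mul_le fun t _ => ?_
  have hv₂ := norm_iteratedDeriv_two_wideCompetitor_le d a b ε t
  have hv₁ := norm_deriv_wideCompetitor_le d a b ε t
  rw [abs_of_pos hε₀] at hv₁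
  have hE : E (wideCompetitor d a b ε t) ≤ M :=
    (le_abs_self _).trans (hM _ (wideCompetitor_mem_closedBall d a b ε t))
  have hε₂ : ε ^ 2 ≤ 1 := pow_le_one₀ hε₀.le hε₁
  calc _ ≤ ρ / 2 * (ε ^ 2 * B₂) ^ 2 + ε * ν / 2 * (ε * B₁) ^ 2 + ε ^ 2 * M := by gcongr
    _ = ε ^ 2 * (ρ / 2 * B₂ ^ 2 * ε ^ 2 + ν / 2 * B₁ ^ 2 * ε + M) := by ring
    _ ≤ ε ^ 2 * (ρ / 2 * B₂ ^ 2 * 1 + ν / 2 * B₁ ^ 2 * 1 + M) := by gcongr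
    _ ≤ (ρ / 2 * B₂ ^ 2 + ν / 2 * B₁ ^ 2 + M + 1) * ε ^ 2 := by nlinarith
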